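/- Let f be a submodular function on V with multilinear extension F, and let x = Σ_{i=1}^t β_i 1_{B_i} be a convex combination of characteristic vectors of bases of a matroid M. Suppose B1 and B2 are replaced by random bases B1', B2' via the UpdateWithCycle procedure (using a directed cycle in D_M(B1,B2)), with B_i' = B_i for i ≥ 3, and let x' = Σ_{i=1}^t β_i 1_{B_i'}. Then E[F(x')] ≥ F(x). -/

import Mathlib

open Finset

/-- A set function `f` on a finite ground set is submodular. -/
def Submodular {V : Type*} [Fintype V] [DecidableEq V] (f : Finset V → ℝ) : Prop :=
  ∀ A B : Finset V, f (A ∪ B) + f (A ∩ B) ≤ f A + f B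

/-- The multilinear extension `F` of a set function `f`. -/
def multilinearExt {V : Type*} [Fintype V] [DecidableEq V] (f : Finset V → ℝ)
    (x : V → ℝ) : ℝ :=
  ∑ S : Finset V, f S * ((∏ v ∈ S, x v) * ∏ v ∈ Sᶜ, (1 - x v))

/-- The indicator (characteristic) vector of a set, with real values. -/
noncomputable def charVec {α : Type*} (S : Set α) : α → ℝ :=
  S.indicator (fun _ => (1 : ℝ))

/-!
Along a direction `e_a - e_b` the multilinear extension `F` is a quadratic polynomial whose leading
coefficient is `-(∂_a ∂_b F)`, and submodularity makes `∂_a ∂_b F ≤ 0` on the unit cube. Hence `F`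
lies above its tangent line in such a direction. Both moves of `UpdateWithCycle` are of this
kind: the first changes `x` by `β₀ (e_{vᵢ} - e_{uᵢ})`, the second by `β₁ (e_{uᵢ₊₁} - e_{vᵢ})`.
Weighted by `β₁` and `β₀`, the first-order terms of the two moves cancel after averaging over
the cycle, so only the nonnegative second-order terms remain.
-/

open Function
open scoped BigOperators

section MultilinearExt

variable {α : Type*} [DecidableEq α]

/-- The probability that the random set of `F` meets `U` exactly in `S`. -/
def subsetWeight (x : α → ℝ) (U S : Finset α) : ℝ :=
  (∏ v ∈ S, x v) * ∏ v ∈ U \ S, (1 - x v)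

lemma subsetWeight_nonneg {x : α → ℝ} (hx : ∀ w, x w ∈ Set.Icc 0 1) (U S : Finset α) :
    0 ≤ subsetWeight x U S :=
  mul_nonneg (prod_nonneg fun w _ => (hx w).1) (prod_nonneg fun w _ => sub_nonneg.2 (hx w).2)

lemma subsetWeight_update_of_notMem {x : α → ℝ} {U S : Finset α} {a : α} (ha : a ∉ U)
    (hS : S ⊆ U) (c : ℝ) : subsetWeight (update x a c) U S = subsetWeight x U S := by
  have hne : ∀ w ∈ U, w ≠ a := fun w hw h => ha (h ▸ hw)
  unfold subsetWeight
  congr 1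
  · exact prod_congr rfl fun w hw => update_of_ne (hne w (hS hw)) c x
  · exact prod_congr rfl fun w hw => by rw [update_of_ne (hne w (mem_sdiff.1 hw).1)]

lemma update_mem_Icc {x : α → ℝ} (hx : ∀ w, x w ∈ Set.Icc 0 1) (a : α) {c : ℝ}
    (hc : c ∈ Set.Icc 0 1) (w : α) : update x a c w ∈ Set.Icc 0 1 := by
  rcases eq_or_ne w a with rfl | h
  · rwa [update_self]
  · rw [update_of_ne h]; exact hx w

variable [Fintype α]

/-- Conditioning the random set of `F` on whether it contains `a`. -/
lemma multilinearExt_eq_sum_powerset_erase (f : Finset α → ℝ) (x : α → ℝ) (a : α) :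
    multilinearExt f x = ∑ S ∈ (univ.erase a).powerset,
      (x a * f (insert a S) + (1 - x a) * f S) * subsetWeight x (univ.erase a) S := by
  have ha : a ∉ univ.erase a := notMem_erase a univ
  have hF : multilinearExt f x = ∑ S ∈ (insert a (univ.erase a)).powerset,
      f S * subsetWeight x (insert a (univ.erase a)) S := by
    simp only [insert_erase (mem_univ a), powerset_univ, multilinearExt, subsetWeight,
      compl_eq_univ_sdiff]
  rw [hF, sum_powerset_insert ha, ← sum_add_distrib]
  refine sum_congr rfl fun S hS => ?_
  have haS : a ∉ S := fun h => ha (mem_powerset.1 hS h)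
  have hW : subsetWeight x (insert a (univ.erase a)) S
      = (1 - x a) * subsetWeight x (univ.erase a) S := by
    rw [subsetWeight, insert_sdiff_of_notMem _ haS, prod_insert fun h => ha (mem_sdiff.1 h).1,
      subsetWeight]
    ring
  have hWa : subsetWeight x (insert a (univ.erase a)) (insert a S)
      = x a * subsetWeight x (univ.erase a) S := by
    rw [subsetWeight, insert_sdiff_insert, sdiff_insert_of_notMem ha, prod_insert haS, subsetWeight]
    ring
  rw [hW, hWa]
  ring

lemma multilinearExt_update (f : Finset α → ℝ) (x : α → ℝ) (a : α) (c : ℝ) :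
    multilinearExt f (update x a c)
      = c * multilinearExt f (update x a 1) + (1 - c) * multilinearExt f (update x a 0) := by
  simp only [multilinearExt_eq_sum_powerset_erase f _ a, update_self, mul_sum]
  rw [← sum_add_distrib]
  refine sum_congr rfl fun S hS => ?_
  simp only [subsetWeight_update_of_notMem (notMem_erase a univ) (mem_powerset.1 hS)]
  ring

/-- The partial derivative `∂F/∂x_a`, which does not depend on `x a` since `F` is affine in it. -/
def multilinearExtPartial (f : Finset α → ℝ) (x : α → ℝ) (a : α) : ℝ :=
  multilinearExt f (update x a 1) - multilinearExt f (update x a 0)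

lemma multilinearExtPartial_eq_sum (f : Finset α → ℝ) (x : α → ℝ) (a : α) :
    multilinearExtPartial f x a = ∑ S ∈ (univ.erase a).powerset,
      (f (insert a S) - f S) * subsetWeight x (univ.erase a) S := by
  simp only [multilinearExtPartial, multilinearExt_eq_sum_powerset_erase f _ a, update_self]
  rw [← sum_sub_distrib]
  refine sum_congr rfl fun S hS => ?_
  simp only [subsetWeight_update_of_notMem (notMem_erase a univ) (mem_powerset.1 hS)]
  ring

lemma multilinearExtPartial_eq_multilinearExt (f : Finset α → ℝ) (x : α → ℝ) (a : α) :
    multilinearExtPartial f x a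
      = multilinearExt (fun S => f (insert a S) - f S) (update x a 0) := by
  rw [multilinearExtPartial_eq_sum, multilinearExt_eq_sum_powerset_erase _ _ a]
  refine sum_congr rfl fun S hS => ?_
  rw [subsetWeight_update_of_notMem (notMem_erase a univ) (mem_powerset.1 hS), update_self]
  ring

lemma multilinearExtPartial_nonpos {f : Finset α → ℝ} {x : α → ℝ}
    (hx : ∀ w, x w ∈ Set.Icc 0 1) {a : α} (hf : ∀ S, f (insert a S) ≤ f S) :
    multilinearExtPartial f x a ≤ 0 := by
  rw [multilinearExtPartial_eq_sum]
  exact sum_nonpos fun S _ =>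
    mul_nonpos_of_nonpos_of_nonneg (sub_nonpos.2 (hf S)) (subsetWeight_nonneg hx _ _)

lemma Submodular.marginal_insert_le {f : Finset α → ℝ} (hf : Submodular f) {a b : α}
    (hab : a ≠ b) (S : Finset α) :
    f (insert a (insert b S)) - f (insert b S) ≤ f (insert a S) - f S := by
  have h := hf (insert a S) (insert b S)
  have hunion : insert a S ∪ insert b S = insert a (insert b S) := by
    ext w; simp only [mem_union, mem_insert]; tauto
  have hinter : insert a S ∩ insert b S = S := by
    ext w; simp only [mem_inter, mem_insert]
    constructor
    · rintro ⟨rfl | h, rfl | h'⟩ <;> first | exact absurd rfl hab | assumption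
    · exact fun h => ⟨Or.inr h, Or.inr h⟩
  rw [hunion, hinter] at h
  linarith

lemma Submodular.multilinearExtPartial_update_one_le_update_zero {f : Finset α → ℝ}
    (hf : Submodular f) {x : α → ℝ} (hx : ∀ w, x w ∈ Set.Icc 0 1) {a b : α} (hab : a ≠ b) :
    multilinearExtPartial f (update x b 1) a ≤ multilinearExtPartial f (update x b 0) a := by
  rw [multilinearExtPartial_eq_multilinearExt, multilinearExtPartial_eq_multilinearExt,
    update_comm hab.symm, update_comm hab.symm, ← sub_nonpos]
  exact multilinearExtPartial_nonpos (update_mem_Icc hx a (by simp)) (hf.marginal_insert_le hab)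

lemma Submodular.multilinearExt_add_smul_single_sub_single_ge {f : Finset α → ℝ}
    (hf : Submodular f) {x : α → ℝ} (hx : ∀ w, x w ∈ Set.Icc 0 1) {a b : α} (hab : a ≠ b)
    (c : ℝ) :
    multilinearExt f x + c * (multilinearExtPartial f x a - multilinearExtPartial f x b)
      ≤ multilinearExt f (x + c • (Pi.single a 1 - Pi.single b 1)) := by
  set G : ℝ → ℝ → ℝ := fun s r => multilinearExt f (update (update x b r) a s) with hG
  have hGa : ∀ s r, G s r = s * G 1 r + (1 - s) * G 0 r := fun s r =>
    multilinearExt_update f _ a s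
  have hGb : ∀ s r, G s r = r * G s 1 + (1 - r) * G s 0 := fun s r => by
    simp only [hG, update_comm hab.symm]
    exact multilinearExt_update f _ b r
  have hx_eq : multilinearExt f x = G (x a) (x b) := by simp [hG]
  have hy_eq : multilinearExt f (x + c • (Pi.single a 1 - Pi.single b 1))
      = G (x a + c) (x b - c) := by
    refine congrArg _ (funext fun w => ?_)
    rcases eq_or_ne w a with rfl | hwa
    · simp [hab]
    rcases eq_or_ne w b with rfl | hwb
    · simp [hwa, sub_eq_add_neg]
    · simp [hwa, hwb]
  have hDa : multilinearExtPartial f x a = G 1 (x b) - G 0 (x b) := by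
    simp [hG, multilinearExtPartial]
  have hDb : multilinearExtPartial f x b = G (x a) 1 - G (x a) 0 := by
    have hfix : ∀ k, update (update x b k) a (x a) = update x b k := fun k => by
      rw [← update_of_ne hab k x, update_eq_self]
    simp only [hG, multilinearExtPartial, hfix]
  have hcross : G 1 1 - G 0 1 ≤ G 1 0 - G 0 0 :=
    hf.multilinearExtPartial_update_one_le_update_zero hx hab
  rw [hx_eq, hy_eq, hDa, hDb, hGa (x a + c), hGa (x a), hGa (x a) 1, hGa (x a) 0,
    hGb 1 (x b), hGb 0 (x b), hGb 1 (x b - c), hGb 0 (x b - c)]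
  -- the two sides differ by exactly `c ^ 2 * ((G 1 0 - G 0 0) - (G 1 1 - G 0 1))`
  nlinarith [mul_nonneg (sq_nonneg c) (sub_nonneg.2 hcross)]

end MultilinearExt

lemma charVec_insert_sdiff_singleton {α : Type*} [DecidableEq α] {S : Set α} {u v : α}
    (hu : u ∈ S) (hv : v ∉ S) :
    charVec (insert v (S \ {u})) = charVec S + Pi.single v 1 - Pi.single u 1 := by
  have huv : u ≠ v := fun h => hv (h ▸ hu)
  funext w
  rcases eq_or_ne w u with rfl | hwu
  · simp [charVec, hu, huv]
  rcases eq_or_ne w v with rfl | hwv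
  · simp [charVec, hv, hwu]
  · have hmem : w ∈ insert v (S \ {u}) ↔ w ∈ S := by simp [hwu, hwv]
    by_cases h : w ∈ S
    · simp [charVec, Set.indicator_of_mem h, Set.indicator_of_mem (hmem.2 h), hwu, hwv]
    · simp [charVec, Set.indicator_of_notMem h, Set.indicator_of_notMem (mt hmem.1 h), hwu, hwv]

lemma sum_mul_charVec_mem_Icc {ι α : Type*} [Fintype ι] {β : ι → ℝ} (hβ : ∀ i, 0 ≤ β i)
    (hβsum : ∑ i, β i = 1) (B : ι → Set α) (w : α) :
    ∑ i, β i * charVec (B i) w ∈ Set.Icc 0 1 := by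
  have h01 : ∀ i, charVec (B i) w ∈ Set.Icc (0 : ℝ) 1 := fun i => by
    by_cases h : w ∈ B i <;> simp [charVec, h]
  refine ⟨sum_nonneg fun i _ => mul_nonneg (hβ i) (h01 i).1, ?_⟩
  calc ∑ i, β i * charVec (B i) w ≤ ∑ i, β i :=
        sum_le_sum fun i _ => mul_le_of_le_one_right (hβ i) (h01 i).2
    _ = 1 := hβsum

lemma add_mul_expect_le_expect {ι : Type*} [Fintype ι] [Nonempty ι] {c p : ℝ} {d g : ι → ℝ}
    (h : ∀ i, c + p * d i ≤ g i) : c + p * 𝔼 i, d i ≤ 𝔼 i, g i := by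
  calc c + p * 𝔼 i, d i = 𝔼 i, (c + p * d i) := by
        rw [expect_add_distrib, expect_const univ_nonempty, mul_expect]
    _ ≤ 𝔼 i, g i := expect_le_expect fun i _ => h i

lemma le_div_mul_add_div_mul {F p q d A B : ℝ} (hp : 0 ≤ p) (hq : 0 ≤ q) (hpq : 0 < p + q)
    (hA : F + p * d ≤ A) (hB : F + q * -d ≤ B) : F ≤ q / (p + q) * A + p / (p + q) * B := by
  calc F = q / (p + q) * (F + p * d) + p / (p + q) * (F + q * -d) := by
        field_simp; ring
    _ ≤ q / (p + q) * A + p / (p + q) * B := by gcongr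

lemma ZMod.inv_natCast_mul_sum_eq_expect {l : ℕ} [NeZero l] (g : ZMod l → ℝ) :
    (l : ℝ)⁻¹ * ∑ i, g i = 𝔼 i, g i := by
  rw [Fintype.expect_eq_sum_div_card, ZMod.card, div_eq_inv_mul]

lemma ZMod.expect_sub_add_one_eq_neg {l : ℕ} [NeZero l] (g h : ZMod l → ℝ) :
    𝔼 i, (g (i + 1) - h i) = -𝔼 i, (h i - g i) := by
  rw [expect_sub_distrib, expect_sub_distrib,
    Fintype.expect_equiv (Equiv.addRight 1) (fun i => g (i + 1)) g fun _ => rfl]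
  ring

theorem updateWithCycle_multilinear_ge_general {α : Type*} [Fintype α] [DecidableEq α]
    (f : Finset α → ℝ) (hf : Submodular f)
    (t : ℕ) [NeZero t] (β : Fin t → ℝ)
    (hβ : ∀ i, 0 ≤ β i) (hβsum : ∑ i, β i = 1) (B : Fin t → Set α)
    (hβ01 : 0 < β 0 + β 1)
    (l : ℕ) [NeZero l] (u v : ZMod l → α)
    (hu : ∀ i, u i ∈ B 0 \ B 1) (hv : ∀ i, v i ∈ B 1 \ B 0)
    (x x1 x2 : _) (hx : x = fun w => ∑ j, β j * charVec (B j) w)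
    (hx1 : x1 = fun (i : ZMod l) (w : α) =>
      x w - β 0 * charVec (B 0) w + β 0 * charVec (insert (v i) (B 0 \ {u i})) w)
    (hx2 : x2 = fun (i : ZMod l) (w : α) =>
      x w - β 1 * charVec (B 1) w + β 1 * charVec (insert (u (i + 1)) (B 1 \ {v i})) w) :
    multilinearExt f x ≤
      (β 1 / (β 0 + β 1)) * ((l : ℝ)⁻¹ * ∑ i : ZMod l, multilinearExt f (x1 i))
      + (β 0 / (β 0 + β 1)) * ((l : ℝ)⁻¹ * ∑ i : ZMod l, multilinearExt f (x2 i)) := by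
  have hxI : ∀ w, x w ∈ Set.Icc 0 1 := fun w => hx ▸ sum_mul_charVec_mem_Icc hβ hβsum B w
  set D := multilinearExtPartial f x
  have hgain1 : ∀ i, multilinearExt f x + β 0 * (D (v i) - D (u i))
      ≤ multilinearExt f (x1 i) := by
    intro i
    have hne : v i ≠ u i := fun h => (hv i).2 (h ▸ (hu i).1)
    convert hf.multilinearExt_add_smul_single_sub_single_ge hxI hne (β 0) using 2
    funext w
    simp only [hx1, charVec_insert_sdiff_singleton (hu i).1 (hv i).2, Pi.add_apply, Pi.sub_apply,
      Pi.smul_apply, smul_eq_mul]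
    ring
  have hgain2 : ∀ i, multilinearExt f x + β 1 * (D (u (i + 1)) - D (v i))
      ≤ multilinearExt f (x2 i) := by
    intro i
    have hne : u (i + 1) ≠ v i := fun h => (hu (i + 1)).2 (h ▸ (hv i).1)
    convert hf.multilinearExt_add_smul_single_sub_single_ge hxI hne (β 1) using 2
    funext w
    simp only [hx2, charVec_insert_sdiff_singleton (hv i).1 (hu (i + 1)).2, Pi.add_apply,
      Pi.sub_apply, Pi.smul_apply, smul_eq_mul]
    ring
  have havg2 := add_mul_expect_le_expect hgain2
  rw [ZMod.expect_sub_add_one_eq_neg (fun i => D (u i)) (fun i => D (v i))] at havg2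
  rw [ZMod.inv_natCast_mul_sum_eq_expect, ZMod.inv_natCast_mul_sum_eq_expect]
  exact le_div_mul_add_div_mul (hβ 0) (hβ 1) hβ01 (add_mul_expect_le_expect hgain1) havg2

/-- Correctness of `UpdateWithCycle`: if `x = ∑ᵢ βᵢ 1_{Bᵢ}` is a convex combination of
characteristic vectors of bases of a matroid `M`, and `B 0`, `B 1` are updated using a
directed cycle `u 0, v 0, …, u (l-1), v (l-1)` in `D_M(B 0, B 1)` (with probability
`β 1 / (β 0 + β 1)` replace `B 0` by `B 0 + v i - u i` for uniform `i`, else replace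
`B 1` by `B 1 + u (i+1) - v i` for uniform `i`), while `Bᵢ` for `i ≥ 2` are unchanged,
then `E[F(x')] ≥ F(x)` for the multilinear extension `F` of any submodular `f`. -/
theorem updateWithCycle_multilinear_ge {α : Type*} [Fintype α] [DecidableEq α]
    (f : Finset α → ℝ) (hf : Submodular f) (M : Matroid α)
    (t : ℕ) [NeZero t] (ht : 2 ≤ t) (β : Fin t → ℝ)
    (hβ : ∀ i, 0 ≤ β i) (hβsum : ∑ i, β i = 1) (B : Fin t → Set α)
    (hB : ∀ i, M.IsBase (B i)) (hβ01 : 0 < β 0 + β 1)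
    (l : ℕ) [NeZero l] (u v : ZMod l → α)
    (hu : ∀ i, u i ∈ B 0 \ B 1) (hv : ∀ i, v i ∈ B 1 \ B 0)
    (he1 : ∀ i, M.Indep (insert (v i) (B 0 \ {u i})))
    (he2 : ∀ i, M.Indep (insert (u (i + 1)) (B 1 \ {v i})))
    (x x1 x2 : _) (hx : x = fun w => ∑ j, β j * charVec (B j) w)
    (hx1 : x1 = fun (i : ZMod l) (w : α) =>
      x w - β 0 * charVec (B 0) w + β 0 * charVec (insert (v i) (B 0 \ {u i})) w)
    (hx2 : x2 = fun (i : ZMod l) (w : α) =>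
      x w - β 1 * charVec (B 1) w + β 1 * charVec (insert (u (i + 1)) (B 1 \ {v i})) w) :
    multilinearExt f x ≤
      (β 1 / (β 0 + β 1)) * ((l : ℝ)⁻¹ * ∑ i : ZMod l, multilinearExt f (x1 i))
      + (β 0 / (β 0 + β 1)) * ((l : ℝ)⁻¹ * ∑ i : ZMod l, multilinearExt f (x2 i)) :=
  updateWithCycle_multilinear_ge_general f hf t β hβ hβsum B hβ01 l u v hu hv x x1 x2 hx hx1 hx2
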